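/- The property of being (2,3)-cordial is not closed under vertex deletion: there exists a (2,3)-cordial tournament on 5 vertices and a vertex whose deletion yields a tournament that is not (2,3)-cordial, and there exists a tournament on 6 vertices that is not (2,3)-cordial and a vertex whose deletion yields a tournament that is (2,3)-cordial. -/
import Mathlib


/-- A `(0,1)`-vertex labelling is friendly if the numbers of vertices labelled `0`
and labelled `1` differ by at most one. -/
def Friendly {V : Type*} (f : V → Fin 2) : Prop :=
  |(Nat.card {v : V // f v = 0} : ℤ) - (Nat.card {v : V // f v = 1} : ℤ)| ≤ 1

/-- The number of arcs of the digraph `D` whose induced label `f(head) - f(tail)`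
equals `x`. -/
noncomputable def arcCount {V : Type*} (D : V → V → Prop) (f : V → Fin 2) (x : ℤ) : ℕ :=
  Nat.card {p : V × V // D p.1 p.2 ∧ ((f p.2).val : ℤ) - ((f p.1).val : ℤ) = x}

/-- A digraph is `(2,3)`-cordial if some friendly vertex labelling induces an arc
labelling in which the numbers of arcs labelled `1`, `-1`, `0` pairwise differ by
at most one. -/
def Cordial23 {V : Type*} (D : V → V → Prop) : Prop :=
  ∃ f : V → Fin 2, Friendly f ∧
    |(arcCount D f 1 : ℤ) - (arcCount D f (-1) : ℤ)| ≤ 1 ∧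
    |(arcCount D f 1 : ℤ) - (arcCount D f 0 : ℤ)| ≤ 1 ∧
    |(arcCount D f (-1) : ℤ) - (arcCount D f 0 : ℤ)| ≤ 1

/-- A tournament: a loopless digraph with exactly one arc between every pair of
distinct vertices. -/
def IsTournament {V : Type*} (D : V → V → Prop) : Prop :=
  (∀ v : V, ¬ D v v) ∧ ∀ u v : V, u ≠ v → (D u v ↔ ¬ D v u)

/-- A (simple) digraph: loopless, with at most one arc between any two distinct
vertices (an orientation of a simple graph). -/
def IsDigraph {V : Type*} (D : V → V → Prop) : Prop :=
  (∀ v : V, ¬ D v v) ∧ ∀ u v : V, D u v → ¬ D v u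

/- Auxiliary: decidable reformulation of Cordial23 on a finite type. -/

lemma natCard_subtype {V : Type*} [Fintype V] (p : V → Prop) [DecidablePred p] :
    Nat.card {v : V // p v} = (Finset.univ.filter p).card := by
  rw [Nat.card_eq_fintype_card, Fintype.card_subtype]

noncomputable def acount {V : Type*} [Fintype V] (D : V → V → Prop) [DecidableRel D]
    (f : V → Fin 2) (x : ℤ) : ℕ :=
  ((Finset.univ : Finset (V × V)).filter
    (fun p => D p.1 p.2 ∧ ((f p.2).val : ℤ) - ((f p.1).val : ℤ) = x)).card

def Cordial23' {V : Type*} [Fintype V] (D : V → V → Prop) [DecidableRel D] : Prop :=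
  ∃ f : V → Fin 2,
    |((Finset.univ.filter (fun v => f v = 0)).card : ℤ)
      - ((Finset.univ.filter (fun v => f v = 1)).card : ℤ)| ≤ 1 ∧
    |(acount D f 1 : ℤ) - (acount D f (-1) : ℤ)| ≤ 1 ∧
    |(acount D f 1 : ℤ) - (acount D f 0 : ℤ)| ≤ 1 ∧
    |(acount D f (-1) : ℤ) - (acount D f 0 : ℤ)| ≤ 1

lemma arcCount_eq {V : Type*} [Fintype V] (D : V → V → Prop) [DecidableRel D]
    (f : V → Fin 2) (x : ℤ) : arcCount D f x = acount D f x := by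
  unfold arcCount acount
  exact natCard_subtype _

lemma cordial_iff {V : Type*} [Fintype V] (D : V → V → Prop) [DecidableRel D] :
    Cordial23 D ↔ Cordial23' D := by
  unfold Cordial23 Cordial23' Friendly
  refine exists_congr fun f => ?_
  rw [natCard_subtype (fun v => f v = 0), natCard_subtype (fun v => f v = 1),
    arcCount_eq, arcCount_eq, arcCount_eq]

instance {V : Type*} [Fintype V] [DecidableEq V] (D : V → V → Prop) [DecidableRel D] :
    Decidable (Cordial23' D) := by
  unfold Cordial23' acount; infer_instance

/- The examples. -/

def D5 : Fin 5 → Fin 5 → Prop :=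
  fun a b => (b < a ∧ ¬(a = 4 ∧ b = 2)) ∨ (a = 2 ∧ b = 4)

instance : DecidableRel D5 := fun a b => by unfold D5; infer_instance

def D6 : Fin 6 → Fin 6 → Prop := fun a b => b < a

instance : DecidableRel D6 := fun a b => by unfold D6; infer_instance

/-- (2,3)-cordiality is not closed under vertex deletion: there is a (2,3)-cordial
5-tournament with a vertex whose deletion gives a non-(2,3)-cordial tournament, and a
non-(2,3)-cordial 6-tournament with a vertex whose deletion gives a (2,3)-cordial
tournament. -/
theorem cordial_not_closed_vertex_deletion :
    (∃ D : Fin 5 → Fin 5 → Prop, IsTournament D ∧ Cordial23 D ∧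
      ∃ v : Fin 5, ¬ Cordial23 (fun a b : {u : Fin 5 // u ≠ v} => D a.1 b.1)) ∧
    (∃ D : Fin 6 → Fin 6 → Prop, IsTournament D ∧ ¬ Cordial23 D ∧
      ∃ v : Fin 6, Cordial23 (fun a b : {u : Fin 6 // u ≠ v} => D a.1 b.1)) := by
  constructor
  · refine ⟨D5, ?_, ?_, 0, ?_⟩
    · constructor
      · decide
      · decide
    · rw [cordial_iff]; decide
    · rw [cordial_iff (fun a b : {u : Fin 5 // u ≠ 0} => D5 a.1 b.1)]; decide
  · refine ⟨D6, ?_, ?_, 0, ?_⟩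
    · constructor
      · decide
      · decide
    · rw [cordial_iff]; decide
    · rw [cordial_iff (fun a b : {u : Fin 6 // u ≠ 0} => D6 a.1 b.1)]; decide
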